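/- A finite group G whose conjugacy supercommuting graph is complete (every two elements have commuting conjugates) is abelian. -/

import Mathlib

/-!
If every two elements have commuting conjugates, then every element `g` has a conjugate in the
centralizer of a fixed `x`, i.e. the conjugates of `C(x)` cover `G`. By Jordan's lemma a proper
subgroup of a finite group never does this: by Burnside's lemma a transitive action on `G ⧸ H` has
on average one fixed point per element, while the identity fixes all `[G : H] ≥ 2` of them, so
some element fixes no coset, i.e. has no conjugate in `H`. Hence `C(x) = G` for every `x`.
-/

theorem MulAction.exists_forall_smul_ne_of_isPretransitive (G X : Type*) [Group G] [Finite G]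
    [MulAction G X] [Finite X] [Nontrivial X] [IsPretransitive G X] :
    ∃ g : G, ∀ x : X, g • x ≠ x := by
  classical
  cases nonempty_fintype G
  cases nonempty_fintype X
  by_contra! hfix
  have : Unique (orbitRel.Quotient G X) :=
    ((pretransitive_iff_unique_quotient_of_nonempty G X).mp inferInstance).some
  have hlt : ∑ _g : G, 1 < ∑ g : G, Fintype.card (fixedBy X g) := by
    refine Finset.sum_lt_sum (fun g _ => ?_) ⟨1, Finset.mem_univ _, ?_⟩
    · obtain ⟨x, hx⟩ := hfix g
      exact Fintype.card_pos_iff.mpr ⟨⟨x, hx⟩⟩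
    · simpa [fixedBy_one_eq_univ] using Fintype.one_lt_card
  rw [sum_card_fixedBy_eq_card_orbits_mul_card_group, Fintype.card_unique] at hlt
  simp at hlt

theorem Subgroup.eq_top_of_forall_exists_conj_mem {G : Type*} [Group G] [Finite G]
    (H : Subgroup G) (hH : ∀ g : G, ∃ k : G, k⁻¹ * g * k ∈ H) : H = ⊤ := by
  by_contra hne
  have : Nontrivial (G ⧸ H) := QuotientGroup.nontrivial_iff.mpr hne
  obtain ⟨g, hg⟩ := MulAction.exists_forall_smul_ne_of_isPretransitive G (G ⧸ H)
  obtain ⟨k, hk⟩ := hH g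
  refine hg k (QuotientGroup.eq.mpr ?_)
  simpa [mul_assoc] using H.inv_mem hk

theorem Commute.conj_conj {G : Type*} [Group G] {x y a b : G}
    (h : Commute (a⁻¹ * x * a) (b⁻¹ * y * b)) :
    Commute x ((b * a⁻¹)⁻¹ * y * (b * a⁻¹)) := by
  simpa [mul_assoc] using h.map (MulAut.conj a).toMonoidHom

theorem stmt_9 (G : Type*) [Group G] [Finite G]
    (h : ∀ x y : G, ∃ a b : G, Commute (a⁻¹ * x * a) (b⁻¹ * y * b)) :
    ∀ x y : G, x * y = y * x := by
  intro x y
  have hcentralizer : Subgroup.centralizer {x} = ⊤ := by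
    refine Subgroup.eq_top_of_forall_exists_conj_mem _ fun g => ?_
    obtain ⟨a, b, hab⟩ := h x g
    exact ⟨b * a⁻¹, Subgroup.mem_centralizer_singleton_iff.mpr hab.conj_conj.eq.symm⟩
  exact (Subgroup.mem_centralizer_singleton_iff.mp (hcentralizer ▸ Subgroup.mem_top y)).symm
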